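/- arXiv:2304.12074 — 3 statements merged into one kernel-verified Lean document; each statement's English description precedes it below -/
import Mathlib

section
/- For every n ≥ 1 one has 4 < q_n ≤ 6/(1−θ) and q_n ≤ q_{n+1}; in other words, the bootstrap sequence (q_n) is monotone increasing and satisfies 4 < q_n ≤ 6/(1−θ) for all n. -/
lemma boot_step (θ a : ℝ) (hθ0 : 0 < θ) (hθ1 : θ < 1) (ha : 4 < a) :
    12 * (6 * a / (6 + a)) / (6 - θ * (6 * a / (6 + a))) = 12 * a / (6 + (1 - θ) * a) := by
  have h1 : (6:ℝ) + a ≠ 0 := by linarith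
  have h2 : (0:ℝ) < 6 + (1 - θ) * a := by nlinarith
  have h3 : 6 - θ * (6 * a / (6 + a)) = 6 * (6 + (1 - θ) * a) / (6 + a) := by
    field_simp; ring
  rw [h3]
  have h4 : 6 * (6 + (1 - θ) * a) / (6 + a) ≠ 0 := by
    apply div_ne_zero _ h1
    positivity
  field_simp

/-- The bootstrap exponents `q_n` defined by `q₁ = 12/(3−θ)`,
`q̃_{n+1} = 6 q_n/(6 + q_n)`, `q_{n+1} = 12 q̃_{n+1}/(6 − θ q̃_{n+1})`
satisfy `4 < q_n ≤ 6/(1−θ)` and are monotone increasing. -/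
theorem stmt_2 (θ : ℝ) (hθ : θ ∈ Set.Ioo (0 : ℝ) 1)
    (q qt : ℕ → ℝ)
    (hq1 : q 1 = 12 / (3 - θ))
    (hrec : ∀ n ≥ 1, qt (n + 1) = 6 * q n / (6 + q n) ∧
      q (n + 1) = 12 * qt (n + 1) / (6 - θ * qt (n + 1))) :
    ∀ n ≥ 1, 4 < q n ∧ q n ≤ 6 / (1 - θ) ∧ q n ≤ q (n + 1) := by
  obtain ⟨hθ0, hθ1⟩ := hθ
  have h1θ : (0:ℝ) < 1 - θ := by linarith
  -- closed form of the recursion given q n > 4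
  have hform : ∀ n ≥ 1, 4 < q n → q (n + 1) = 12 * q n / (6 + (1 - θ) * q n) := by
    intro n hn hq
    obtain ⟨h1, h2⟩ := hrec n hn
    rw [h2, h1, boot_step θ (q n) hθ0 hθ1 hq]
  -- main invariant by induction
  have key : ∀ n ≥ 1, 4 < q n ∧ q n ≤ 6 / (1 - θ) := by
    intro n hn
    induction n, hn using Nat.le_induction with
    | base =>
      constructor
      · rw [hq1, lt_div_iff₀ (by linarith)]; nlinarith
      · rw [hq1, div_le_div_iff₀ (by linarith) h1θ]; nlinarith
    | succ n hn ih =>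
      obtain ⟨ih1, ih2⟩ := ih
      have hd : (0:ℝ) < 6 + (1 - θ) * q n := by nlinarith
      rw [hform n hn ih1]
      constructor
      · rw [lt_div_iff₀ hd]; nlinarith
      · rw [div_le_div_iff₀ hd h1θ]
        rw [le_div_iff₀ h1θ] at ih2
        nlinarith
  intro n hn
  obtain ⟨h1, h2⟩ := key n hn
  refine ⟨h1, h2, ?_⟩
  have hd : (0:ℝ) < 6 + (1 - θ) * q n := by nlinarith
  rw [hform n hn h1, le_div_iff₀ hd]
  rw [le_div_iff₀ h1θ] at h2
  nlinarith
end

section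
/- The sequence (q_n) converges, and its limit is q̄ = 6/(1−θ); i.e., q_n → 6/(1−θ) as n → ∞. -/
/-- The bootstrap sequence `q_n` converges to `q̄ = 6/(1−θ)`. -/
theorem stmt_3 (θ : ℝ) (hθ : θ ∈ Set.Ioo (0 : ℝ) 1)
    (q qt : ℕ → ℝ)
    (hq1 : q 1 = 12 / (3 - θ))
    (hrec : ∀ n ≥ 1, qt (n + 1) = 6 * q n / (6 + q n) ∧
      q (n + 1) = 12 * qt (n + 1) / (6 - θ * qt (n + 1))) :
    Filter.Tendsto q Filter.atTop (nhds (6 / (1 - θ))) := by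
  obtain ⟨hθ0, hθ1⟩ := hθ
  have h1θ : (0:ℝ) < 1 - θ := by linarith
  have hD : ∀ n : ℕ, (0:ℝ) < (1 - θ) * 2 ^ n + (1 + θ) := by
    intro n
    have h2 : (0:ℝ) < (2:ℝ) ^ n := by positivity
    nlinarith
  -- closed form
  have hform : ∀ n ≥ 1, q n = 6 * 2 ^ n / ((1 - θ) * 2 ^ n + (1 + θ)) := by
    intro n hn
    induction n, hn using Nat.le_induction with
    | base =>
      rw [hq1]
      rw [div_eq_div_iff (by linarith) (hD 1).ne']
      ring
    | succ n hn ih =>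
      obtain ⟨h1, h2⟩ := hrec n hn
      set D : ℝ := (1 - θ) * 2 ^ n + (1 + θ) with hDdef
      have hDpos : (0:ℝ) < D := hD n
      have h2n : (0:ℝ) < (2:ℝ) ^ n := by positivity
      have hE : (0:ℝ) < D + 2 ^ n := by linarith
      have hqt : qt (n + 1) = 6 * 2 ^ n / (D + 2 ^ n) := by
        rw [h1, ih]
        have hden : (6:ℝ) + 6 * 2 ^ n / D ≠ 0 := by positivity
        rw [div_eq_div_iff (by positivity) hE.ne']
        field_simp
      have hden2 : (0:ℝ) < 6 - θ * (6 * 2 ^ n / (D + 2 ^ n)) := by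
        have hx0 : (0:ℝ) < 6 * 2 ^ n / (D + 2 ^ n) := by positivity
        have hx6 : 6 * 2 ^ n / (D + 2 ^ n) < 6 := by
          rw [div_lt_iff₀ hE]; nlinarith
        nlinarith
      rw [h2, hqt]
      rw [div_eq_div_iff hden2.ne' (hD (n+1)).ne']
      have hEne : (D + 2 ^ n) ≠ 0 := hE.ne'
      field_simp
      ring
  -- limit
  have key : Filter.Tendsto (fun n : ℕ => 6 / ((1 - θ) + (1 + θ) * (2:ℝ)⁻¹ ^ n))
      Filter.atTop (nhds (6 / (1 - θ))) := by
    have h0 : Filter.Tendsto (fun n : ℕ => ((2:ℝ)⁻¹) ^ n) Filter.atTop (nhds 0) :=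
      tendsto_pow_atTop_nhds_zero_of_lt_one (by norm_num) (by norm_num)
    have hden : Filter.Tendsto (fun n : ℕ => (1 - θ) + (1 + θ) * (2:ℝ)⁻¹ ^ n)
        Filter.atTop (nhds (1 - θ)) := by
      have := (h0.const_mul (1 + θ)).const_add (1 - θ)
      simpa using this
    have := (tendsto_const_nhds : Filter.Tendsto (fun _ : ℕ => (6:ℝ)) Filter.atTop (nhds 6)).div
      hden h1θ.ne'
    exact this
  refine key.congr' ?_
  filter_upwards [Filter.eventually_ge_atTop 1] with n hn
  rw [hform n hn]
  have h2n : (0:ℝ) < (2:ℝ) ^ n := by positivity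
  have hp : (0:ℝ) < 1 - θ + (1 + θ) * (2:ℝ)⁻¹ ^ n := by
    have h2i : (0:ℝ) < (2:ℝ)⁻¹ ^ n := by positivity
    nlinarith
  rw [div_eq_div_iff hp.ne' (hD n).ne']
  field_simp
  have hh : ((1:ℝ)/2)^n * 2^n = 1 := by rw [← mul_pow]; norm_num
  linear_combination (-(θ) - 1) * hh
end

section
/- The auxiliary sequence (q̃_n) converges with q̃_n → 6/(2−θ) as n → ∞; moreover the limiting exponents satisfy 6/(1−θ) > 6 and 6/(2−θ) > 3. -/
/-- The auxiliary bootstrap sequence `q̃_n` converges to `6/(2−θ)`; moreover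
`6/(1−θ) > 6` and `6/(2−θ) > 3`. -/
theorem stmt_4 (θ : ℝ) (hθ : θ ∈ Set.Ioo (0 : ℝ) 1)
    (q qt : ℕ → ℝ)
    (hq1 : q 1 = 12 / (3 - θ))
    (hrec : ∀ n ≥ 1, qt (n + 1) = 6 * q n / (6 + q n) ∧
      q (n + 1) = 12 * qt (n + 1) / (6 - θ * qt (n + 1))) :
    Filter.Tendsto qt Filter.atTop (nhds (6 / (2 - θ)))
      ∧ 6 / (1 - θ) > 6 ∧ 6 / (2 - θ) > 3 := by
  obtain ⟨hθ0, hθ1⟩ := hθ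
  set d : ℕ → ℝ := fun n => (1 - θ) / 6 + (1 + θ) / 12 * (1 / 2) ^ n with hd
  have hdpos : ∀ n, 0 < d n := by
    intro n
    have h1 : (0:ℝ) < (1 + θ) / 12 * (1 / 2) ^ n := by positivity
    have h2 : (0:ℝ) < (1 - θ) / 6 := by linarith
    simp only [hd]
    linarith
  -- explicit formula for q
  have hqf : ∀ n, q (n + 1) = 1 / d n := by
    intro n
    induction n with
    | zero =>
      have hne : (3:ℝ) - θ ≠ 0 := by linarith
      simp only [hq1, hd, pow_zero]
      rw [eq_div_iff (by linarith : (1-θ)/6 + (1+θ)/12 * 1 ≠ 0)]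
      field_simp
      ring
    | succ n ih =>
      have hdn := hdpos n
      have hdn1 := hdpos (n + 1)
      obtain ⟨hqt, hq⟩ := hrec (n + 1) (by omega)
      have hD : (0:ℝ) < 6 * d n + 1 := by linarith
      have hqt' : qt (n + 2) = 6 / (6 * d n + 1) := by
        rw [hqt, ih]
        field_simp
      have hden : (0:ℝ) < 6 - θ * (6 / (6 * d n + 1)) := by
        have h1 : θ * (6 / (6 * d n + 1)) < 6 := by
          rw [mul_div_assoc'] at *
          rw [div_lt_iff₀ hD]
          nlinarith
        linarith
      rw [hq, hqt']
      rw [div_eq_div_iff (by linarith) (by linarith)]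
      have key : 12 * d (n + 1) = 6 * d n + 1 - θ := by
        simp only [hd, pow_succ]
        ring
      field_simp
      nlinarith [key, hdn.ne', hD.ne']
  -- formula for qt
  have hqtf : ∀ n, qt (n + 2) = 6 / (6 * d n + 1) := by
    intro n
    have hdn := hdpos n
    obtain ⟨hqt, _⟩ := hrec (n + 1) (by omega)
    rw [hqt, hqf n]
    field_simp
  have h2θ : (2:ℝ) - θ ≠ 0 := by linarith
  have htend : Filter.Tendsto qt Filter.atTop (nhds (6 / (2 - θ))) := by
    rw [← Filter.tendsto_add_atTop_iff_nat 2]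
    have hpow : Filter.Tendsto (fun n : ℕ => ((1:ℝ) / 2) ^ n) Filter.atTop (nhds 0) := by
      apply tendsto_pow_atTop_nhds_zero_of_lt_one <;> norm_num
    have hdenom : Filter.Tendsto (fun n : ℕ => 6 * d n + 1) Filter.atTop (nhds (2 - θ)) := by
      have : Filter.Tendsto (fun n : ℕ => 6 * ((1 - θ) / 6 + (1 + θ) / 12 * (1/2:ℝ) ^ n) + 1)
          Filter.atTop (nhds (6 * ((1 - θ) / 6 + (1 + θ) / 12 * 0) + 1)) := by
        exact (((tendsto_const_nhds.add (tendsto_const_nhds.mul hpow)).const_mul 6).add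
          tendsto_const_nhds)
      convert this using 2
      ring
    have : Filter.Tendsto (fun n : ℕ => 6 / (6 * d n + 1)) Filter.atTop (nhds (6 / (2 - θ))) :=
      Filter.Tendsto.div tendsto_const_nhds hdenom h2θ
    exact this.congr (fun n => (hqtf n).symm)
  refine ⟨htend, ?_, ?_⟩
  · rw [gt_iff_lt, lt_div_iff₀ (by linarith : (0:ℝ) < 1 - θ)]
    nlinarith
  · rw [gt_iff_lt, lt_div_iff₀ (by linarith : (0:ℝ) < 2 - θ)]
    nlinarith
end
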